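/- arXiv:1510.05036 — 3 statements merged into one kernel-verified Lean document; each statement's English description precedes it below -/
import Mathlib

section
/- Let X be a symmetric subset of a real vector space (i.e., x ∈ X implies −x ∈ X), Y a real inner product space, I : X → ℝ even, Φ : X → Y odd, and μ > 0. Suppose u ∈ X is a global minimum of x ↦ I(x) + μ‖Φ(x)‖² and that I(u) ≤ I(x) + 2μ(⟨Φ(x), Φ(u)⟩ − ‖Φ(u)‖²) for all x ∈ X. Then Φ(u) = 0 and u is a global minimum of I on X. -/
theorem stmt_2_general {V Y : Type*} [AddCommGroup V] [Module ℝ V]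
    [NormedAddCommGroup Y] [InnerProductSpace ℝ Y]
    (X : Set V) (hXsym : ∀ x ∈ X, -x ∈ X)
    (I : V → ℝ) (Φ : V → Y)
    (hIeven : ∀ x ∈ X, I (-x) = I x) (hΦodd : ∀ x ∈ X, Φ (-x) = -Φ x)
    (μ : ℝ) (hμ : 0 < μ) (u : V) (huX : u ∈ X)
    (hineq : ∀ x ∈ X, I u ≤ I x + 2 * μ * ((inner ℝ (Φ x) (Φ u) : ℝ) - ‖Φ u‖ ^ 2)) :
    Φ u = 0 ∧ ∀ x ∈ X, I u ≤ I x := by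
  have hΦu : Φ u = 0 := by
    have h := hineq (-u) (hXsym u huX)
    rw [hIeven u huX, hΦodd u huX, inner_neg_left, real_inner_self_eq_norm_sq] at h
    have hsq : ‖Φ u‖ ^ 2 ≤ 0 := by nlinarith
    simpa using hsq
  exact ⟨hΦu, fun x hx => by simpa [hΦu] using hineq x hx⟩

theorem stmt_2 {V Y : Type*} [AddCommGroup V] [Module ℝ V]
    [NormedAddCommGroup Y] [InnerProductSpace ℝ Y]
    (X : Set V) (hXne : X.Nonempty) (hXsym : ∀ x ∈ X, -x ∈ X)
    (I : V → ℝ) (Φ : V → Y)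
    (hIeven : ∀ x ∈ X, I (-x) = I x) (hΦodd : ∀ x ∈ X, Φ (-x) = -Φ x)
    (μ : ℝ) (hμ : 0 < μ) (u : V) (huX : u ∈ X)
    (hu : ∀ x ∈ X, I u + μ * ‖Φ u‖ ^ 2 ≤ I x + μ * ‖Φ x‖ ^ 2)
    (hineq : ∀ x ∈ X, I u ≤ I x + 2 * μ * ((inner ℝ (Φ x) (Φ u) : ℝ) - ‖Φ u‖ ^ 2)) :
    Φ u = 0 ∧ ∀ x ∈ X, I u ≤ I x :=
  stmt_2_general X hXsym I Φ hIeven hΦodd μ hμ u huX hineq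
end

section
/- Let Ω ⊂ ℝⁿ be a bounded domain, F : Ω × ℝ → ℝ a Carathéodory function with F(x,0) = 0, satisfying the growth condition |F(x,ξ)| ≤ C(1 + |ξ|^{q+1}) with q subcritical, and suppose limsup_{|ξ|→+∞} sup_{x∈Ω} F(x,ξ)/ξ² ≤ 0. Then the functional J_F(u) = ∫_Ω F(x, u(x)) dx on H¹₀(Ω) satisfies limsup_{‖u‖→+∞} J_F(u)/‖u‖² ≤ 0, where ‖u‖² = ∫_Ω |∇u|² dx. -/
/-!
By the Gagliardo–Nirenberg–Sobolev inequality with exponent `p = (1/2 + 1/n)⁻¹` followed by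
Hölder's inequality on the bounded set `Ω`, functions supported in `Ω` satisfy the Poincaré
inequality `∫ u² ≤ K ∫ ‖∇u‖²`. Given `δ > 0`, the hypothesis on the `limsup` handles `|ξ| > M`
and the growth bound handles `|ξ| ≤ M`, so `F x ξ ≤ δ ξ² + c` uniformly in `x`.
Integrating gives `J_F(u) ≤ δ K ‖u‖² + c |Ω|`, and the constant `c |Ω|` is absorbed
into `ε ‖u‖² / 2` once `‖u‖` is large.
-/

open MeasureTheory Module Function
open scoped ENNReal NNReal

theorem integral_norm_sq_eq_lpNorm_sq {α F : Type*} [MeasurableSpace α] [NormedAddCommGroup F]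
    {ν : Measure α} {f : α → F} (hf : AEStronglyMeasurable f ν) :
    ∫ x, ‖f x‖ ^ 2 ∂ν = lpNorm f 2 ν ^ 2 := by
  have h := lpNorm_nnreal_eq_integral_norm_rpow (p := 2) two_ne_zero hf
  simp only [ENNReal.coe_ofNat, NNReal.coe_ofNat, Real.rpow_two] at h
  rw [h, ← Real.rpow_natCast, ← Real.rpow_mul (integral_nonneg fun x => by positivity)]
  norm_num

theorem integral_norm_sq_le_of_eLpNorm_two_le {α F G : Type*} [MeasurableSpace α]
    [NormedAddCommGroup F] [NormedAddCommGroup G] {ν : Measure α} {f : α → F} {g : α → G}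
    {K : ℝ≥0} (hf : AEStronglyMeasurable f ν) (hg : MemLp g 2 ν)
    (h : eLpNorm f 2 ν ≤ K * eLpNorm g 2 ν) :
    ∫ x, ‖f x‖ ^ 2 ∂ν ≤ K ^ 2 * ∫ x, ‖g x‖ ^ 2 ∂ν := by
  have hlp : lpNorm f 2 ν ≤ K * lpNorm g 2 ν := by
    rw [← toReal_eLpNorm hf, ← toReal_eLpNorm hg.aestronglyMeasurable, ← ENNReal.coe_toReal,
      ← ENNReal.toReal_mul]
    exact ENNReal.toReal_mono (ENNReal.mul_ne_top ENNReal.coe_ne_top hg.eLpNorm_ne_top) h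
  rw [integral_norm_sq_eq_lpNorm_sq hf, integral_norm_sq_eq_lpNorm_sq hg.aestronglyMeasurable,
    ← mul_pow]
  exact pow_le_pow_left₀ lpNorm_nonneg hlp 2

section Poincare

variable {E F : Type*} [NormedAddCommGroup E] [NormedSpace ℝ E] [MeasurableSpace E] [BorelSpace E]
  [FiniteDimensional ℝ E] [NormedAddCommGroup F] [NormedSpace ℝ F] [FiniteDimensional ℝ F]
  (μ : Measure E) [μ.IsAddHaarMeasure]

theorem exists_eLpNorm_two_le_eLpNorm_fderiv_two (hE : 2 ≤ finrank ℝ E) {s : Set E}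
    (hs : Bornology.IsBounded s) :
    ∃ K : ℝ≥0, ∀ u : E → F, ContDiff ℝ 1 u → tsupport u ⊆ s →
      eLpNorm u 2 (μ.restrict s) ≤ K * eLpNorm (fderiv ℝ u) 2 (μ.restrict s) := by
  set n : ℝ≥0 := (finrank ℝ E : ℝ≥0)
  have hn : (2 : ℝ≥0) ≤ n := by unfold n; exact_mod_cast hE
  -- the exponent whose Sobolev conjugate is `2`
  set p : ℝ≥0 := (2⁻¹ + n⁻¹)⁻¹
  have hp_one : 1 ≤ p := by
    rw [one_le_inv₀ (by positivity)]
    calc 2⁻¹ + n⁻¹ ≤ 2⁻¹ + 2⁻¹ := by gcongr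
      _ = 1 := by norm_num
  have hp_two : p ≤ 2 := by
    rw [inv_le_comm₀ (by positivity) two_pos]
    exact le_add_of_nonneg_right (by positivity)
  have hp_n : p < n := by
    rw [inv_lt_comm₀ (by positivity) (by positivity)]
    exact lt_add_of_pos_left _ (by norm_num)
  have hp_sobolev : (p : ℝ)⁻¹ - (finrank ℝ E : ℝ)⁻¹ ≤ ((2 : ℝ≥0) : ℝ)⁻¹ := by
    simp [p, n]
  set θ : ℝ := 1 / (p : ℝ) - 1 / 2
  have hθ : 0 ≤ θ :=
    sub_nonneg.mpr (one_div_le_one_div_of_le (by positivity) (by exact_mod_cast hp_two))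
  refine ⟨eLpNormLESNormFDerivOfLeConst F μ s p 2 * (μ s).toNNReal ^ θ, fun u hu hsupp => ?_⟩
  have hsupp_u : support u ⊆ s := (subset_tsupport u).trans hsupp
  have hsupp_du : support (fderiv ℝ u) ⊆ s := (support_fderiv_subset ℝ).trans hsupp
  have hholder := eLpNorm_le_eLpNorm_mul_rpow_measure_univ (μ := μ.restrict s)
      (p := (p : ℝ≥0∞)) (q := 2) (by exact_mod_cast hp_two)
      (hu.continuous_fderiv one_ne_zero).aestronglyMeasurable
  rw [Measure.restrict_apply_univ] at hholder
  calc eLpNorm u 2 (μ.restrict s)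
      = eLpNorm u (2 : ℝ≥0) μ := eLpNorm_restrict_eq_of_support_subset hsupp_u
    _ ≤ eLpNormLESNormFDerivOfLeConst F μ s p 2 * eLpNorm (fderiv ℝ u) p μ :=
      eLpNorm_le_eLpNorm_fderiv_of_le μ hu hsupp_u hp_one hp_n hp_sobolev hs
    _ = eLpNormLESNormFDerivOfLeConst F μ s p 2 * eLpNorm (fderiv ℝ u) p (μ.restrict s) := by
      rw [eLpNorm_restrict_eq_of_support_subset (f := fderiv ℝ u) hsupp_du]
    _ ≤ eLpNormLESNormFDerivOfLeConst F μ s p 2 *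
          (eLpNorm (fderiv ℝ u) 2 (μ.restrict s) * μ s ^ θ) := by
      gcongr
      simpa [θ] using hholder
    _ = _ := by
      rw [ENNReal.coe_mul, ENNReal.coe_rpow_of_nonneg _ hθ,
        ENNReal.coe_toNNReal hs.measure_lt_top.ne]
      ring

theorem exists_setIntegral_norm_sq_le_mul_setIntegral_norm_fderiv_sq (hE : 2 ≤ finrank ℝ E)
    {s : Set E} (hs : Bornology.IsBounded s) :
    ∃ K : ℝ≥0, ∀ u : E → F, ContDiff ℝ 1 u → tsupport u ⊆ s →
      ∫ x in s, ‖u x‖ ^ 2 ∂μ ≤ K * ∫ x in s, ‖fderiv ℝ u x‖ ^ 2 ∂μ := by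
  obtain ⟨K, hK⟩ := exists_eLpNorm_two_le_eLpNorm_fderiv_two (F := F) μ hE hs
  refine ⟨K ^ 2, fun u hu hsupp => ?_⟩
  have hcs : HasCompactSupport u :=
    Metric.isCompact_of_isClosed_isBounded (isClosed_tsupport u) (hs.subset hsupp)
  have hdu : MemLp (fderiv ℝ u) 2 (μ.restrict s) :=
    ((hu.continuous_fderiv one_ne_zero).memLp_of_hasCompactSupport
      (hcs.fderiv (𝕜 := ℝ))).restrict s
  exact_mod_cast integral_norm_sq_le_of_eLpNorm_two_le hu.continuous.aestronglyMeasurable hdu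
    (hK u hu hsupp)

end Poincare

section Caratheodory

variable {α : Type*} {s : Set α} {F : α → ℝ → ℝ} {C r : ℝ}

theorem abs_apply_le_of_growth (hr : 0 ≤ r) (hgrowth : ∀ x ∈ s, ∀ ξ, |F x ξ| ≤ C * (1 + |ξ| ^ r))
    {x : α} (hx : x ∈ s) {ξ M : ℝ} (hξ : |ξ| ≤ M) : |F x ξ| ≤ |C| * (1 + M ^ r) :=
  calc |F x ξ| ≤ C * (1 + |ξ| ^ r) := hgrowth x hx ξ
    _ ≤ |C| * (1 + |ξ| ^ r) := by gcongr; exact le_abs_self C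
    _ ≤ |C| * (1 + M ^ r) := by gcongr

theorem exists_le_mul_sq_add_of_growth (hr : 0 ≤ r)
    (hgrowth : ∀ x ∈ s, ∀ ξ, |F x ξ| ≤ C * (1 + |ξ| ^ r)) {ε M : ℝ} (hε : 0 ≤ ε)
    (hM : ∀ ξ, M < |ξ| → ∀ x ∈ s, F x ξ ≤ ε * ξ ^ 2) :
    ∃ c, ∀ x ∈ s, ∀ ξ, F x ξ ≤ ε * ξ ^ 2 + c := by
  refine ⟨|C| * (1 + |M| ^ r), fun x hx ξ => ?_⟩
  rcases le_or_gt |ξ| |M| with hξ | hξ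
  · have := (le_abs_self _).trans (abs_apply_le_of_growth hr hgrowth hx hξ)
    have : 0 ≤ ε * ξ ^ 2 := by positivity
    linarith
  · have := hM ξ ((le_abs_self M).trans_lt hξ) x hx
    have : 0 ≤ |C| * (1 + |M| ^ r) := by positivity
    linarith

variable [MeasurableSpace α]

theorem measurable_apply_of_caratheodory (hmeas : ∀ ξ, Measurable fun x => F x ξ)
    (hcont : ∀ x, Continuous (F x)) {u : α → ℝ} (hu : Measurable u) :
    Measurable fun x => F x (u x) :=
  (measurable_uncurry_of_continuous_of_measurable (u := fun ξ x => F x ξ) hcont hmeas).comp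
    (hu.prodMk measurable_id)

theorem setIntegral_apply_le_mul_setIntegral_sq_add {μ : Measure α}
    (hmeas : ∀ ξ, Measurable fun x => F x ξ) (hcont : ∀ x, Continuous (F x)) (hr : 0 ≤ r)
    (hgrowth : ∀ x ∈ s, ∀ ξ, |F x ξ| ≤ C * (1 + |ξ| ^ r)) (hs : MeasurableSet s)
    (hμs : μ s ≠ ∞) {u : α → ℝ} (hu : Measurable u) {T : ℝ} (hT : ∀ x, |u x| ≤ T) {ε c : ℝ}
    (hc : ∀ x ∈ s, ∀ ξ, F x ξ ≤ ε * ξ ^ 2 + c) :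
    ∫ x in s, F x (u x) ∂μ ≤ ε * ∫ x in s, u x ^ 2 ∂μ + c * μ.real s := by
  have hFu : IntegrableOn (fun x => F x (u x)) s μ := by
    refine Measure.integrableOn_of_bounded hμs
      (measurable_apply_of_caratheodory hmeas hcont hu).aestronglyMeasurable
      (M := |C| * (1 + T ^ r)) ?_
    rw [ae_restrict_iff' hs]
    exact ae_of_all _ fun x hx => abs_apply_le_of_growth hr hgrowth hx (hT x)
  have hu2 : IntegrableOn (fun x => u x ^ 2) s μ := by
    refine Measure.integrableOn_of_bounded hμs (hu.pow_const 2).aestronglyMeasurable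
      (M := T ^ 2) (ae_of_all _ fun x => ?_)
    simp only [Real.norm_eq_abs, abs_pow]
    exact pow_le_pow_left₀ (abs_nonneg _) (hT x) 2
  have hbound : IntegrableOn (fun x => ε * u x ^ 2 + c) s μ :=
    (hu2.const_mul ε).add (integrableOn_const hμs)
  calc ∫ x in s, F x (u x) ∂μ ≤ ∫ x in s, (ε * u x ^ 2 + c) ∂μ :=
        setIntegral_mono_on hFu hbound hs fun x hx => hc x hx (u x)
    _ = ε * ∫ x in s, u x ^ 2 ∂μ + c * μ.real s := by
      rw [integral_add (hu2.const_mul ε) (integrableOn_const hμs), integral_const_mul,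
        setIntegral_const, smul_eq_mul, mul_comm c]

end Caratheodory

theorem le_mul_of_le_half_mul_add_of_sqrt_lt {J I B ε : ℝ} (hε : 0 < ε)
    (hJ : J ≤ ε / 2 * I + B) (hI : √(2 * B / ε) < √I) : J ≤ ε * I := by
  have hI_pos : 0 < I := Real.sqrt_pos.mp ((Real.sqrt_nonneg _).trans_lt hI)
  have : 2 * B / ε < I := (Real.sqrt_lt_sqrt_iff_of_pos hI_pos).mp hI
  rw [div_lt_iff₀ hε] at this
  linarith

theorem stmt_6_general {n : ℕ} (hn : 2 ≤ n)
    (Ω : Set (EuclideanSpace ℝ (Fin n))) (hΩopen : IsOpen Ω)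
    (hΩbdd : Bornology.IsBounded Ω)
    (F : EuclideanSpace ℝ (Fin n) → ℝ → ℝ)
    (hFmeas : ∀ ξ : ℝ, Measurable (fun x => F x ξ))
    (hFcont : ∀ x, Continuous (F x))
    (q C : ℝ) (hq : 0 < q)
    (hgrowth : ∀ x ∈ Ω, ∀ ξ : ℝ, |F x ξ| ≤ C * (1 + |ξ| ^ (q + 1)))
    (hlimsup : ∀ ε > (0 : ℝ), ∃ M : ℝ, ∀ ξ : ℝ, M < |ξ| → ∀ x ∈ Ω, F x ξ ≤ ε * ξ ^ 2) :
    ∀ ε > (0 : ℝ), ∃ R : ℝ, ∀ u : EuclideanSpace ℝ (Fin n) → ℝ,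
      ContDiff ℝ 1 u → tsupport u ⊆ Ω →
      R < Real.sqrt (∫ x in Ω, ‖fderiv ℝ u x‖ ^ 2) →
      (∫ x in Ω, F x (u x)) ≤ ε * (∫ x in Ω, ‖fderiv ℝ u x‖ ^ 2) := by
  intro ε hε
  obtain ⟨K, hK⟩ := exists_setIntegral_norm_sq_le_mul_setIntegral_norm_fderiv_sq (F := ℝ) volume
    (by rwa [finrank_euclideanSpace_fin]) hΩbdd
  set δ : ℝ := ε / 2 / (K + 1)
  obtain ⟨M, hM⟩ := hlimsup δ (by positivity)
  obtain ⟨c, hc⟩ := exists_le_mul_sq_add_of_growth (by linarith) hgrowth (by positivity) hM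
  refine ⟨√(2 * (c * volume.real Ω) / ε), fun u hu hsupp hR =>
    le_mul_of_le_half_mul_add_of_sqrt_lt hε ?_ hR⟩
  have hcs : HasCompactSupport u :=
    Metric.isCompact_of_isClosed_isBounded (isClosed_tsupport u) (hΩbdd.subset hsupp)
  obtain ⟨T, hT⟩ := hcs.exists_bound_of_continuous hu.continuous
  have hpoincare := hK u hu hsupp
  simp only [Real.norm_eq_abs, sq_abs] at hpoincare hT
  calc ∫ x in Ω, F x (u x)
      ≤ δ * (∫ x in Ω, u x ^ 2) + c * volume.real Ω :=
        setIntegral_apply_le_mul_setIntegral_sq_add hFmeas hFcont (by linarith) hgrowth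
          hΩopen.measurableSet hΩbdd.measure_lt_top.ne hu.continuous.measurable hT hc
    _ ≤ δ * (K * ∫ x in Ω, ‖fderiv ℝ u x‖ ^ 2) + c * volume.real Ω := by gcongr
    _ ≤ ε / 2 * (∫ x in Ω, ‖fderiv ℝ u x‖ ^ 2) + c * volume.real Ω := by
      have hδK : δ * K ≤ ε / 2 := by
        rw [div_mul_eq_mul_div, div_le_iff₀ (by positivity)]
        nlinarith
      rw [← mul_assoc]
      gcongr

theorem stmt_6 {n : ℕ} (hn : 2 ≤ n)
    (Ω : Set (EuclideanSpace ℝ (Fin n))) (hΩopen : IsOpen Ω)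
    (hΩbdd : Bornology.IsBounded Ω)
    (F : EuclideanSpace ℝ (Fin n) → ℝ → ℝ)
    (hFmeas : ∀ ξ : ℝ, Measurable (fun x => F x ξ))
    (hFcont : ∀ x, Continuous (F x))
    (hF0 : ∀ x, F x 0 = 0)
    (q C : ℝ) (hq : 0 < q) (hqsub : 2 < n → q < ((n : ℝ) + 2) / ((n : ℝ) - 2))
    (hgrowth : ∀ x ∈ Ω, ∀ ξ : ℝ, |F x ξ| ≤ C * (1 + |ξ| ^ (q + 1)))
    (hlimsup : ∀ ε > (0 : ℝ), ∃ M : ℝ, ∀ ξ : ℝ, M < |ξ| → ∀ x ∈ Ω, F x ξ ≤ ε * ξ ^ 2) :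
    ∀ ε > (0 : ℝ), ∃ R : ℝ, ∀ u : EuclideanSpace ℝ (Fin n) → ℝ,
      ContDiff ℝ 1 u → tsupport u ⊆ Ω →
      R < Real.sqrt (∫ x in Ω, ‖fderiv ℝ u x‖ ^ 2) →
      (∫ x in Ω, F x (u x)) ≤ ε * (∫ x in Ω, ‖fderiv ℝ u x‖ ^ 2) :=
  stmt_6_general hn Ω hΩopen hΩbdd F hFmeas hFcont q C hq hgrowth hlimsup
end

section
/- Let (T, F, μ) be a measure space with 0 < μ(T) < +∞, E a real Banach space, p ≥ 1, and f : E → ℝ a lower semicontinuous and even function which has no global minimum (f is not assumed to be bounded below); assume |f(x)| ≤ C(1 + ‖x‖^p) for some C. Let X ⊆ L^p(T, E) be a symmetric set (u ∈ X implies −u ∈ X) containing all constant functions. Then there is no û ∈ X with ∫_T f(û(t)) dμ ≤ ∫_T f(u(t)) dμ for all u ∈ X, i.e., the functional u ↦ ∫_T f(u(t)) dμ restricted to X has no global minimum. -/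
open MeasureTheory

theorem stmt_8 {T : Type*} [MeasurableSpace T] (μ : Measure T)
    [IsFiniteMeasure μ] (hμpos : 0 < μ Set.univ)
    {E : Type*} [NormedAddCommGroup E] [NormedSpace ℝ E] [CompleteSpace E]
    (p : ℝ) (hp : 1 ≤ p)
    (f : E → ℝ) (hf : LowerSemicontinuous f)
    (hfeven : ∀ x : E, f (-x) = f x)
    (hnomin : ∀ x : E, ∃ y : E, f y < f x)
    (C : ℝ) (hgrowth : ∀ x : E, |f x| ≤ C * (1 + ‖x‖ ^ p))
    (X : Set (T → E)) (hXLp : ∀ u ∈ X, MemLp u (ENNReal.ofReal p) μ)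
    (hXsym : ∀ u ∈ X, -u ∈ X)
    (hXconst : ∀ c : E, (fun _ : T => c) ∈ X) :
    ¬ ∃ uhat ∈ X, ∀ u ∈ X, (∫ t, f (uhat t) ∂μ) ≤ ∫ t, f (u t) ∂μ := by
  borelize E
  rintro ⟨uhat, huX, hmin⟩
  set I : ℝ := ∫ t, f (uhat t) ∂μ with hI
  set μT : ℝ := (μ Set.univ).toReal with hμT
  have hμTpos : 0 < μT := ENNReal.toReal_pos hμpos.ne' (measure_ne_top μ _)
  set m : ℝ := I / μT with hm
  -- every value of f is at least m
  have hmle : ∀ x : E, m ≤ f x := by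
    intro x
    have := hmin _ (hXconst x)
    rw [integral_const, smul_eq_mul, measureReal_def, ← hμT] at this
    rw [hm, div_le_iff₀ hμTpos]
    linarith [this]
  -- integrability of f ∘ uhat
  have huae : AEStronglyMeasurable uhat μ := (hXLp _ huX).1
  have hgmeas : AEStronglyMeasurable (fun t => f (uhat t)) μ :=
    (hf.measurable.comp_aemeasurable huae.aemeasurable).aestronglyMeasurable
  have hpow : Integrable (fun t => ‖uhat t‖ ^ p) μ := by
    have h0 : (0:ℝ) < p := lt_of_lt_of_le one_pos hp
    have := (hXLp _ huX).integrable_norm_rpow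
      (by simpa using (ENNReal.ofReal_pos.2 h0).ne') ENNReal.ofReal_ne_top
    simpa [ENNReal.toReal_ofReal h0.le] using this
  have hgint : Integrable (fun t => f (uhat t)) μ := by
    refine Integrable.mono' ((hpow.const_mul C).add (integrable_const C)) hgmeas ?_
    filter_upwards with t
    calc ‖f (uhat t)‖ ≤ C * (1 + ‖uhat t‖ ^ p) := by
          simpa [Real.norm_eq_abs] using hgrowth (uhat t)
      _ = C * ‖uhat t‖ ^ p + C := by ring
  -- the nonnegative function f ∘ uhat - m has zero integral
  have hsub : Integrable (fun t => f (uhat t) - m) μ := hgint.sub (integrable_const m)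
  have hnn : 0 ≤ᵐ[μ] fun t => f (uhat t) - m := by
    filter_upwards with t
    simpa using hmle (uhat t)
  have hzero : (∫ t, (f (uhat t) - m) ∂μ) = 0 := by
    rw [integral_sub hgint (integrable_const m), integral_const, smul_eq_mul, ← hI, measureReal_def, ← hμT,
      hm, mul_div_cancel₀ _ hμTpos.ne']
    ring
  have hae : (fun t => f (uhat t) - m) =ᵐ[μ] 0 :=
    (integral_eq_zero_iff_of_nonneg_ae hnn hsub).1 hzero
  have hne : (ae μ).NeBot := by
    refine ae_neBot.2 ?_
    intro h
    simp [h] at hμpos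
  obtain ⟨t, ht⟩ := hae.exists
  have htm : f (uhat t) = m := by simpa [sub_eq_zero] using ht
  obtain ⟨y, hy⟩ := hnomin (uhat t)
  exact absurd (htm ▸ hmle y) (not_le.2 (htm ▸ hy))
end
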